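/- Let G be a simple graph with a proper (Δ(G)+1)-edge coloring α, and let u be a vertex. If the fan X_u(α,v) = (ux_0, ..., ux_p) is a comet in D_u(α), i.e., p ≥ 2 and m_α(x_p) = α(ux_q) for some 1 ≤ q ≤ p−1, then there is a proper (Δ(G)+1)-edge coloring α' Kempe-equivalent to α such that the color class of color α(ux_0) under α' equals the color class of α(ux_0) under α with the edge ux_0 removed (assuming α(ux_0) differs from all other colors α(ux_1),...,α(ux_p) and from m_α(u)). -/

import Mathlib

open SimpleGraph

/-- A proper edge coloring: edges of `G` sharing a vertex get different colors. -/
def IsProperEdgeColoring {V : Type*} (G : SimpleGraph V) {t : ℕ} (c : Sym2 V → Fin t) : Prop :=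
  ∀ e₁ ∈ G.edgeSet, ∀ e₂ ∈ G.edgeSet, e₁ ≠ e₂ → (∃ v, v ∈ e₁ ∧ v ∈ e₂) → c e₁ ≠ c e₂

/-- The chromatic index: least number of colors in a proper edge coloring. -/
noncomputable def chromaticIndex {V : Type*} (G : SimpleGraph V) : ℕ :=
  sInf {t | ∃ c : Sym2 V → Fin t, IsProperEdgeColoring G c}

/-- Color `c` is missing at vertex `w` under coloring `α`. -/
def MissingAt {V : Type*} (G : SimpleGraph V) {t : ℕ} (α : Sym2 V → Fin t) (c : Fin t)
    (w : V) : Prop :=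
  ∀ e ∈ G.edgeSet, w ∈ e → α e ≠ c

/-- The subgraph `K_α(a,b)` induced by the edges colored `a` or `b`. -/
def bicolored {V : Type*} (G : SimpleGraph V) {t : ℕ} (α : Sym2 V → Fin t) (a b : Fin t) :
    SimpleGraph V :=
  SimpleGraph.fromEdgeSet {e | e ∈ G.edgeSet ∧ (α e = a ∨ α e = b)}

/-- `β` is obtained from `α` by a single Kempe change: swapping two colors `a`, `b` on a
connected component of the bicolored subgraph `K_α(a,b)`. -/
def IsKempeSwap {V : Type*} (G : SimpleGraph V) {t : ℕ} (α β : Sym2 V → Fin t) : Prop :=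
  ∃ a b : Fin t, ∃ C : (bicolored G α a b).ConnectedComponent,
    (∀ e ∈ G.edgeSet, (α e = a ∨ α e = b) →
      (∀ v ∈ e, (bicolored G α a b).connectedComponentMk v = C) →
      ((α e = a ∧ β e = b) ∨ (α e = b ∧ β e = a))) ∧
    (∀ e : Sym2 V, (e ∉ G.edgeSet ∨ (α e ≠ a ∧ α e ≠ b) ∨
        ∃ v ∈ e, (bicolored G α a b).connectedComponentMk v ≠ C) → β e = α e)

/-- Kempe equivalence: reachability by a sequence of Kempe changes. -/
def KempeEquiv {V : Type*} (G : SimpleGraph V) {t : ℕ} (α β : Sym2 V → Fin t) : Prop :=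
  Relation.ReflTransGen (IsKempeSwap G) α β

/-- `G` is chordless: in every cycle, any two nonconsecutive vertices are nonadjacent. -/
def Chordless {V : Type*} (G : SimpleGraph V) : Prop :=
  ∀ n : ℕ, 3 ≤ n → ∀ c : ZMod n → V, Function.Injective c →
    (∀ i, G.Adj (c i) (c (i + 1))) →
    ∀ i j : ZMod n, j ≠ i → j ≠ i + 1 → i ≠ j + 1 → ¬ G.Adj (c i) (c j)

/-- An `α`-fan at `u`: edges `u x₀, …, u xₚ` with `m i` a color missing at `x i`
and `α (u x_{i+1}) = m i`. -/
structure IsFan {V : Type*} (G : SimpleGraph V) {t : ℕ} (α : Sym2 V → Fin t)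
    (u : V) (p : ℕ) (x : ℕ → V) (m : ℕ → Fin t) : Prop where
  adj : ∀ i ≤ p, G.Adj u (x i)
  inj : ∀ i ≤ p, ∀ j ≤ p, x i = x j → i = j
  missing : ∀ i ≤ p, MissingAt G α (m i) (x i)
  succ : ∀ i < p, α s(u, x (i + 1)) = m i

/-- The coloring `X_u^{-1}(α,v)`: each fan edge `u xᵢ` is recolored with `m i`,
all other edges keep their color. -/
def IsFanRecolor {V : Type*} {t : ℕ} (α : Sym2 V → Fin t)
    (u : V) (p : ℕ) (x : ℕ → V) (m : ℕ → Fin t) (β : Sym2 V → Fin t) : Prop :=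
  (∀ i ≤ p, β s(u, x i) = m i) ∧ (∀ e : Sym2 V, (∀ i ≤ p, e ≠ s(u, x i)) → β e = α e)

/-- A cycle fan is saturated if for every `i` the component of `K_α(α(u xᵢ), m_α(u))`
containing `u` also contains `x_{i-1}` (cyclically). -/
def SaturatedCycleFan {V : Type*} (G : SimpleGraph V) {t : ℕ} (α : Sym2 V → Fin t)
    (u : V) (p : ℕ) (x : ℕ → V) (mu : Fin t) : Prop :=
  ∀ i ≤ p, (bicolored G α (α s(u, x i)) mu).connectedComponentMk u =
    (bicolored G α (α s(u, x i)) mu).connectedComponentMk (x (if i = 0 then p else i - 1))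

/-!
Write `c = α(ux_q)`, which is missing at `x_{q-1}` and at `x_p`, and `μ` for the colour missing
at `u`. In the bicoloured graph `K_α(c, μ)` every vertex has degree at most two and `u`, `x_{q-1}`,
`x_p` have degree at most one, so these three vertices do not lie in one component. Hence for
`k = q - 1` or `k = p` the component of `x_k` avoids `u`; swapping it makes `μ` missing at `x_k`
and keeps `(ux_0, …, ux_k)` a fan. Rotating that fan, i.e. recolouring `ux_i` with the colour
missing at `x_i` for `i = k, …, 0`, is a sequence of Kempe changes on single edges, and it takes
`ux_0` out of the class of `α(ux_0)` without adding any edge to it.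
-/

section

variable {V : Type*} {t : ℕ} {G : SimpleGraph V} {α β γ : Sym2 V → Fin t} {a b d : Fin t}
  {u v w : V}

theorem SimpleGraph.Reachable.mem_of_adj_closed {H : SimpleGraph V} {S : Set V}
    (hS : ∀ v ∈ S, ∀ w, H.Adj v w → w ∈ S) (h : H.Reachable v w) (hv : v ∈ S) : w ∈ S := by
  obtain ⟨W⟩ := h
  induction W with
  | nil => exact hv
  | cons h _ ih => exact ih (hS _ hv _ h)

theorem SimpleGraph.Walk.IsPath.exists_adj_ne_of_mem_support {H : SimpleGraph V} {b c : V}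
    {P : H.Walk b c} (hP : P.IsPath) (hv : v ∈ P.support) (hvb : v ≠ b) (hvc : v ≠ c) :
    ∃ w₁ w₂, H.Adj v w₁ ∧ H.Adj v w₂ ∧ w₁ ≠ w₂ ∧ w₁ ∈ P.support ∧ w₂ ∈ P.support := by
  obtain ⟨q, r, rfl⟩ := Walk.mem_support_iff_exists_append.mp hv
  have hq : ¬q.Nil := Walk.not_nil_of_ne hvb.symm
  have hr : ¬r.Nil := Walk.not_nil_of_ne hvc
  have hnodup := hP.support_nodup
  rw [Walk.support_append, List.nodup_append] at hnodup
  refine ⟨q.penultimate, r.snd, (Walk.adj_penultimate hq).symm, Walk.adj_snd hr,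
    hnodup.2.2 _ (q.getVert_mem_support _) _ (Walk.snd_mem_tail_support hr), ?_, ?_⟩
  · exact Walk.support_subset_support_append_left _ _ (q.getVert_mem_support _)
  · exact Walk.support_subset_support_append_right _ _ (r.getVert_mem_support _)

theorem SimpleGraph.not_reachable_of_three_leaves {H : SimpleGraph V}
    (hdeg : ∀ v y₁ y₂ y₃, H.Adj v y₁ → H.Adj v y₂ → H.Adj v y₃ → y₁ = y₂ ∨ y₁ = y₃ ∨ y₂ = y₃)
    {a b c : V} (ha : (H.neighborSet a).Subsingleton) (hb : (H.neighborSet b).Subsingleton)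
    (hc : (H.neighborSet c).Subsingleton) (hab : a ≠ b) (hac : a ≠ c) (hbc : b ≠ c)
    (rb : H.Reachable a b) : ¬H.Reachable a c := by
  classical
  rintro rc
  obtain ⟨P, hP⟩ := (rb.symm.trans rc).some.toPath
  have hPb : ¬P.Nil := Walk.not_nil_of_ne hbc
  -- the path from `b` to `c` is a whole component: its inner vertices have no further neighbours
  have hclosed : ∀ v ∈ {v | v ∈ P.support}, ∀ w, H.Adj v w → w ∈ {v | v ∈ P.support} := by
    intro v hv w hw
    by_cases hvb : v = b
    · subst hvb
      exact hb hw (Walk.adj_snd hPb) ▸ P.getVert_mem_support 1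
    by_cases hvc : v = c
    · subst hvc
      exact hc hw (Walk.adj_penultimate hPb).symm ▸ P.getVert_mem_support _
    obtain ⟨w₁, w₂, h₁, h₂, hne, hw₁, hw₂⟩ := hP.exists_adj_ne_of_mem_support hv hvb hvc
    rcases hdeg v w₁ w₂ w h₁ h₂ hw with h | h | h
    exacts [absurd h hne, h ▸ hw₁, h ▸ hw₂]
  have haP : a ∈ P.support :=
    rb.symm.mem_of_adj_closed (S := {v | v ∈ P.support}) hclosed P.start_mem_support
  obtain ⟨w₁, w₂, h₁, h₂, hne, -, -⟩ := hP.exists_adj_ne_of_mem_support haP hab hac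
  exact hne (ha h₁ h₂)

theorem IsProperEdgeColoring.eq_of_apply_eq (hα : IsProperEdgeColoring G α) {w₁ w₂ : V}
    (h₁ : G.Adj v w₁) (h₂ : G.Adj v w₂) (h : α s(v, w₁) = α s(v, w₂)) : w₁ = w₂ := by
  by_contra hne
  exact hα _ h₁ _ h₂ (mt Sym2.congr_right.mp hne) ⟨v, Sym2.mem_mk_left _ _,
    Sym2.mem_mk_left _ _⟩ h

theorem MissingAt.ne (h : MissingAt G α a v) (hvw : G.Adj v w) : α s(v, w) ≠ a :=
  h _ hvw (Sym2.mem_mk_left _ _)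

theorem bicolored_adj :
    (bicolored G α a b).Adj v w ↔ G.Adj v w ∧ (α s(v, w) = a ∨ α s(v, w) = b) := by
  rw [bicolored, fromEdgeSet_adj]
  exact ⟨fun h => h.1, fun h => ⟨h, h.1.ne⟩⟩

theorem bicolored_connectedComponentMk_eq {e : Sym2 V} (he : e ∈ G.edgeSet)
    (hc : α e = a ∨ α e = b) (hv : v ∈ e) (hw : w ∈ e) :
    (bicolored G α a b).connectedComponentMk v = (bicolored G α a b).connectedComponentMk w := by
  obtain ⟨y, rfl⟩ := Sym2.mem_iff_exists.mp hv
  rcases Sym2.mem_iff.mp hw with rfl | rfl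
  · rfl
  · exact ConnectedComponent.eq.mpr (bicolored_adj.mpr ⟨he, hc⟩).reachable

theorem bicolored_neighborSet_subsingleton (hα : IsProperEdgeColoring G α)
    (hv : MissingAt G α a v ∨ MissingAt G α b v) :
    ((bicolored G α a b).neighborSet v).Subsingleton := by
  intro y hy z hz
  rw [mem_neighborSet, bicolored_adj] at hy hz
  refine hα.eq_of_apply_eq hy.1 hz.1 ?_
  rcases hv with hv | hv
  · rw [hy.2.resolve_left (hv.ne hy.1), hz.2.resolve_left (hv.ne hz.1)]
  · rw [hy.2.resolve_right (hv.ne hy.1), hz.2.resolve_right (hv.ne hz.1)]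

theorem bicolored_adj_three (hα : IsProperEdgeColoring G α) {y₁ y₂ y₃ : V}
    (h₁ : (bicolored G α a b).Adj v y₁) (h₂ : (bicolored G α a b).Adj v y₂)
    (h₃ : (bicolored G α a b).Adj v y₃) : y₁ = y₂ ∨ y₁ = y₃ ∨ y₂ = y₃ := by
  rw [bicolored_adj] at h₁ h₂ h₃
  have hcol : α s(v, y₁) = α s(v, y₂) ∨ α s(v, y₁) = α s(v, y₃) ∨
      α s(v, y₂) = α s(v, y₃) := by
    rcases h₁.2 with h | h <;> rcases h₂.2 with h' | h' <;> rcases h₃.2 with h'' | h'' <;>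
      simp [h, h', h'']
  exact hcol.imp (hα.eq_of_apply_eq h₁.1 h₂.1)
    (Or.imp (hα.eq_of_apply_eq h₁.1 h₃.1) (hα.eq_of_apply_eq h₂.1 h₃.1))

section KempeSwap

variable {C : (bicolored G α a b).ConnectedComponent} {e e₁ e₂ : Sym2 V}

def kempeChain (G : SimpleGraph V) (α : Sym2 V → Fin t) (a b : Fin t)
    (C : (bicolored G α a b).ConnectedComponent) : Set (Sym2 V) :=
  {e | e ∈ G.edgeSet ∧ (α e = a ∨ α e = b) ∧
    ∀ v ∈ e, (bicolored G α a b).connectedComponentMk v = C}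

open scoped Classical in
noncomputable def kempeSwap (G : SimpleGraph V) (α : Sym2 V → Fin t) (a b : Fin t)
    (C : (bicolored G α a b).ConnectedComponent) (e : Sym2 V) : Fin t :=
  if e ∈ kempeChain G α a b C then Equiv.swap a b (α e) else α e

theorem kempeSwap_apply_of_mem (h : e ∈ kempeChain G α a b C) :
    kempeSwap G α a b C e = Equiv.swap a b (α e) :=
  if_pos h

theorem kempeSwap_apply_of_notMem (h : e ∉ kempeChain G α a b C) : kempeSwap G α a b C e = α e :=
  if_neg h

theorem mem_kempeChain_of_mem (h₁ : e₁ ∈ kempeChain G α a b C) (h₂ : e₂ ∈ G.edgeSet)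
    (hc : α e₂ = a ∨ α e₂ = b) (hv₁ : v ∈ e₁) (hv₂ : v ∈ e₂) : e₂ ∈ kempeChain G α a b C :=
  ⟨h₂, hc, fun _ hw => (bicolored_connectedComponentMk_eq h₂ hc hw hv₂).trans (h₁.2.2 v hv₁)⟩

theorem kempeSwap_apply_of_connectedComponentMk_ne
    (hv : (bicolored G α a b).connectedComponentMk v ≠ C) (he : v ∈ e) :
    kempeSwap G α a b C e = α e :=
  kempeSwap_apply_of_notMem fun h => hv (h.2.2 v he)

theorem kempeSwap_apply_eq_iff (hda : d ≠ a) (hdb : d ≠ b) :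
    kempeSwap G α a b C e = d ↔ α e = d := by
  by_cases h : e ∈ kempeChain G α a b C
  · rw [kempeSwap_apply_of_mem h]
    rcases h.2.1 with h | h <;> simp [h, hda.symm, hdb.symm]
  · rw [kempeSwap_apply_of_notMem h]

theorem isKempeSwap_kempeSwap : IsKempeSwap G α (kempeSwap G α a b C) := by
  refine ⟨a, b, C, fun e he hc hC => ?_, fun e he => kempeSwap_apply_of_notMem ?_⟩
  · rw [kempeSwap_apply_of_mem ⟨he, hc, hC⟩]
    rcases hc with h | h
    · exact Or.inl ⟨h, by rw [h, Equiv.swap_apply_left]⟩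
    · exact Or.inr ⟨h, by rw [h, Equiv.swap_apply_right]⟩
  · rintro ⟨h₁, h₂, h₃⟩
    rcases he with h | h | ⟨v, hv, hvC⟩
    exacts [h h₁, h₂.elim h.1 h.2, hvC (h₃ v hv)]

theorem kempeSwap_apply_ne_of_mem_of_notMem (h₁ : e₁ ∈ kempeChain G α a b C) (h₂ : e₂ ∈ G.edgeSet)
    (c₂ : e₂ ∉ kempeChain G α a b C) (hv₁ : v ∈ e₁) (hv₂ : v ∈ e₂) :
    kempeSwap G α a b C e₁ ≠ kempeSwap G α a b C e₂ := by
  have hab : α e₂ ≠ a ∧ α e₂ ≠ b :=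
    ⟨fun h => c₂ (mem_kempeChain_of_mem h₁ h₂ (.inl h) hv₁ hv₂),
      fun h => c₂ (mem_kempeChain_of_mem h₁ h₂ (.inr h) hv₁ hv₂)⟩
  rw [kempeSwap_apply_of_mem h₁, kempeSwap_apply_of_notMem c₂]
  rcases h₁.2.1 with h | h
  · rw [h, Equiv.swap_apply_left]; exact hab.2.symm
  · rw [h, Equiv.swap_apply_right]; exact hab.1.symm

theorem IsProperEdgeColoring.kempeSwap (hα : IsProperEdgeColoring G α) :
    IsProperEdgeColoring G (kempeSwap G α a b C) := by
  rintro e₁ h₁ e₂ h₂ hne ⟨v, hv₁, hv₂⟩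
  by_cases c₁ : e₁ ∈ kempeChain G α a b C <;> by_cases c₂ : e₂ ∈ kempeChain G α a b C
  · rw [kempeSwap_apply_of_mem c₁, kempeSwap_apply_of_mem c₂]
    exact (Equiv.swap a b).injective.ne (hα e₁ h₁ e₂ h₂ hne ⟨v, hv₁, hv₂⟩)
  · exact kempeSwap_apply_ne_of_mem_of_notMem c₁ h₂ c₂ hv₁ hv₂
  · exact (kempeSwap_apply_ne_of_mem_of_notMem c₂ h₁ c₁ hv₂ hv₁).symm
  · rw [kempeSwap_apply_of_notMem c₁, kempeSwap_apply_of_notMem c₂]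
    exact hα e₁ h₁ e₂ h₂ hne ⟨v, hv₁, hv₂⟩

theorem MissingAt.kempeSwap_of_connectedComponentMk_ne (hd : MissingAt G α d v)
    (hv : (bicolored G α a b).connectedComponentMk v ≠ C) :
    MissingAt G (kempeSwap G α a b C) d v := by
  intro e he hve
  rw [kempeSwap_apply_of_connectedComponentMk_ne hv hve]
  exact hd e he hve

theorem MissingAt.kempeSwap_of_ne (hd : MissingAt G α d v) (hda : d ≠ a) (hdb : d ≠ b) :
    MissingAt G (kempeSwap G α a b C) d v :=
  fun e he hve h => hd e he hve ((kempeSwap_apply_eq_iff hda hdb).mp h)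

theorem MissingAt.kempeSwap_of_connectedComponentMk_eq (ha : MissingAt G α a v)
    (hv : (bicolored G α a b).connectedComponentMk v = C) :
    MissingAt G (kempeSwap G α a b C) b v := by
  intro e he hve h
  by_cases c : e ∈ kempeChain G α a b C
  · rw [kempeSwap_apply_of_mem c, Equiv.swap_apply_eq_iff, Equiv.swap_apply_right] at h
    exact ha e he hve h
  · rw [kempeSwap_apply_of_notMem c] at h
    exact c ⟨he, .inr h, fun w hw =>
      (bicolored_connectedComponentMk_eq he (.inr h) hw hve).trans hv⟩

theorem kempeSwap_eq_update [DecidableEq V] (hα : IsProperEdgeColoring G α) (h : G.Adj u w)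
    (hu : MissingAt G α b u) (hw : MissingAt G α b w) :
    kempeSwap G α (α s(u, w)) b ((bicolored G α (α s(u, w)) b).connectedComponentMk u) =
      Function.update α s(u, w) b := by
  have hleaf : ∀ v, MissingAt G α b v →
      ((bicolored G α (α s(u, w)) b).neighborSet v).Subsingleton :=
    fun v hv => bicolored_neighborSet_subsingleton hα (.inr hv)
  have huw : (bicolored G α (α s(u, w)) b).Adj u w := bicolored_adj.mpr ⟨h, .inl rfl⟩
  have hcomp : ∀ v, (bicolored G α (α s(u, w)) b).Reachable u v → v = u ∨ v = w := by
    refine fun v hv => hv.mem_of_adj_closed (S := {u, w}) ?_ (Set.mem_insert u _)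
    rintro v (rfl | rfl) y hy
    · exact .inr (hleaf v hu hy huw)
    · exact .inl (hleaf v hw hy huw.symm)
  funext e
  by_cases he : e = s(u, w)
  · subst he
    rw [Function.update_self, kempeSwap_apply_of_mem ⟨h, .inl rfl, fun v hv =>
      bicolored_connectedComponentMk_eq h (.inl rfl) hv (Sym2.mem_mk_left u w)⟩,
      Equiv.swap_apply_left]
  · rw [Function.update_of_ne he, kempeSwap_apply_of_notMem]
    rintro ⟨he', -, hC⟩
    induction e using Sym2.ind with
    | _ v₁ v₂ =>
      have hne : v₁ ≠ v₂ := ((mem_edgeSet G).mp he').ne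
      rcases hcomp v₁ (ConnectedComponent.eq.mp (hC v₁ (Sym2.mem_mk_left _ _)).symm) with
        rfl | rfl <;>
      rcases hcomp v₂ (ConnectedComponent.eq.mp (hC v₂ (Sym2.mem_mk_right _ _)).symm) with
        rfl | rfl
      exacts [hne rfl, he rfl, he Sym2.eq_swap, hne rfl]

theorem IsProperEdgeColoring.update_of_missingAt [DecidableEq V] (hα : IsProperEdgeColoring G α)
    (h : G.Adj u w) (hu : MissingAt G α b u) (hw : MissingAt G α b w) :
    IsProperEdgeColoring G (Function.update α s(u, w) b) := by
  rw [← kempeSwap_eq_update hα h hu hw]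
  exact hα.kempeSwap

theorem isKempeSwap_update_of_missingAt [DecidableEq V] (hα : IsProperEdgeColoring G α)
    (h : G.Adj u w) (hu : MissingAt G α b u) (hw : MissingAt G α b w) :
    IsKempeSwap G α (Function.update α s(u, w) b) := by
  rw [← kempeSwap_eq_update hα h hu hw]
  exact isKempeSwap_kempeSwap

end KempeSwap

section Fan

variable {p k : ℕ} {x : ℕ → V} {m : ℕ → Fin t}

theorem IsFan.of_le (hfan : IsFan G α u p x m) (hk : k ≤ p) : IsFan G α u k x m :=
  ⟨fun i hi => hfan.adj i (hi.trans hk),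
    fun i hi j hj => hfan.inj i (hi.trans hk) j (hj.trans hk),
    fun i hi => hfan.missing i (hi.trans hk), fun i hi => hfan.succ i (hi.trans_le hk)⟩

theorem IsFan.of_eq_of_mem (hfan : IsFan G α u k x m)
    (hβ : ∀ i ≤ k, ∀ e, x i ∈ e → β e = α e) : IsFan G β u k x m := by
  refine ⟨hfan.adj, hfan.inj, fun i hi e he hxe => ?_, fun i hi => ?_⟩
  · rw [hβ i hi e hxe]
    exact hfan.missing i hi e he hxe
  · rw [hβ (i + 1) hi _ (Sym2.mem_mk_right _ _)]
    exact hfan.succ i hi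

theorem IsFan.edge_ne (hfan : IsFan G α u p x m) {i j : ℕ} (hi : i ≤ p) (hj : j ≤ p)
    (hij : i ≠ j) : s(u, x i) ≠ s(u, x j) :=
  fun h => hij (hfan.inj i hi j hj (Sym2.congr_right.mp h))

theorem IsFan.notMem_edge (hfan : IsFan G α u p x m) {i j : ℕ} (hi : i ≤ p) (hj : j ≤ p)
    (hij : i ≠ j) : x i ∉ s(u, x j) := by
  intro h
  rcases Sym2.mem_iff.mp h with h | h
  exacts [(hfan.adj i hi).ne h.symm, hij (hfan.inj i hi j hj h)]

theorem IsFan.exists_kempeEquiv_isFanRecolor [DecidableEq V] (hα : IsProperEdgeColoring G α)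
    (hfan : IsFan G α u k x m) (hm : MissingAt G α (m k) u) :
    ∃ γ, IsProperEdgeColoring G γ ∧ KempeEquiv G α γ ∧ IsFanRecolor α u k x m γ := by
  induction k generalizing α with
  | zero =>
    have hadj := hfan.adj 0 le_rfl
    have hx := hfan.missing 0 le_rfl
    refine ⟨_, hα.update_of_missingAt hadj hm hx,
      .single (isKempeSwap_update_of_missingAt hα hadj hm hx), fun i hi => ?_,
      fun e he => Function.update_of_ne (he 0 le_rfl) _ _⟩
    rw [Nat.le_zero.mp hi, Function.update_self]
  | succ k ih =>
    have hadj := hfan.adj (k + 1) le_rfl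
    have hx := hfan.missing (k + 1) le_rfl
    -- recolour the last edge first; the rest is a shorter fan for the new colouring
    have hfan₁ : IsFan G (Function.update α s(u, x (k + 1)) (m (k + 1))) u k x m :=
      (hfan.of_le k.le_succ).of_eq_of_mem fun i hi e hxe => Function.update_of_ne
        (by rintro rfl; exact hfan.notMem_edge (hi.trans k.le_succ) le_rfl (by omega) hxe) _ _
    have hm₁ : MissingAt G (Function.update α s(u, x (k + 1)) (m (k + 1))) (m k) u := by
      have hsucc := hfan.succ k k.lt_succ_self
      intro e he hue
      by_cases hek : e = s(u, x (k + 1))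
      · subst hek
        rw [Function.update_self, ← hsucc]
        exact (hx _ he (Sym2.mem_mk_right _ _)).symm
      · rw [Function.update_of_ne hek, ← hsucc]
        obtain ⟨y, rfl⟩ := Sym2.mem_iff_exists.mp hue
        exact fun h => hek (Sym2.congr_right.mpr (hα.eq_of_apply_eq he hadj h))
    obtain ⟨γ, hγ, hαγ, hrec⟩ := ih (hα.update_of_missingAt hadj hm hx) hfan₁ hm₁
    have hlast : ∀ i ≤ k, s(u, x (k + 1)) ≠ s(u, x i) :=
      fun i hi => hfan.edge_ne le_rfl (hi.trans k.le_succ) (by omega)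
    refine ⟨γ, hγ, .head (isKempeSwap_update_of_missingAt hα hadj hm hx) hαγ,
      fun i hi => ?_, fun e he => ?_⟩
    · rcases Nat.lt_or_eq_of_le hi with hi | rfl
      · exact hrec.1 i (Nat.lt_succ_iff.mp hi)
      · rw [hrec.2 _ hlast, Function.update_self]
    · rw [hrec.2 e fun i hi => he i (hi.trans k.le_succ),
        Function.update_of_ne (he (k + 1) le_rfl)]

theorem IsFan.kempeSwap_update (hfan : IsFan G α u k x m) (hb : MissingAt G α b u)
    {C : (bicolored G α a b).ConnectedComponent} (hk : m k = a)
    (hC : (bicolored G α a b).connectedComponentMk (x k) = C)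
    (huC : (bicolored G α a b).connectedComponentMk u ≠ C)
    (hprev : ∀ j < k, m j = a → (bicolored G α a b).connectedComponentMk (x j) ≠ C) :
    IsFan G (kempeSwap G α a b C) u k x (Function.update m k b) := by
  refine ⟨hfan.adj, hfan.inj, fun j hj => ?_, fun j hj => ?_⟩
  · rcases Nat.lt_or_eq_of_le hj with hj | rfl
    · rw [Function.update_of_ne hj.ne]
      by_cases hja : m j = a
      · exact (hfan.missing j hj.le).kempeSwap_of_connectedComponentMk_ne (hprev j hj hja)
      · refine (hfan.missing j hj.le).kempeSwap_of_ne hja fun hjb => ?_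
        exact hb.ne (hfan.adj (j + 1) hj) ((hfan.succ j hj).trans hjb)
    · rw [Function.update_self]
      exact (hk ▸ hfan.missing j le_rfl).kempeSwap_of_connectedComponentMk_eq hC
  · rw [kempeSwap_apply_of_connectedComponentMk_ne huC (Sym2.mem_mk_left _ _),
      Function.update_of_ne (Nat.ne_of_lt hj)]
    exact hfan.succ j hj

theorem IsFan.exists_connectedComponentMk_ne_of_comet (hα : IsProperEdgeColoring G α)
    (hfan : IsFan G α u p x m) {q : ℕ} (hq1 : 1 ≤ q) (hqp : q < p)
    (hcomet : m p = α s(u, x q)) {μ : Fin t} (hμ : MissingAt G α μ u) :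
    ∃ k ≤ p, m k = α s(u, x q) ∧
      (bicolored G α (α s(u, x q)) μ).connectedComponentMk u ≠
        (bicolored G α (α s(u, x q)) μ).connectedComponentMk (x k) ∧
      ∀ j < k, m j = α s(u, x q) → (bicolored G α (α s(u, x q)) μ).connectedComponentMk (x j) ≠
        (bicolored G α (α s(u, x q)) μ).connectedComponentMk (x k) := by
  have hsucc := hfan.succ (q - 1) (by omega)
  rw [Nat.sub_add_cancel hq1] at hsucc
  have hqm : ∀ j < p, m j = α s(u, x q) → j = q - 1 := by
    intro j hj hjc
    rw [← hfan.succ j hj] at hjc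
    have := hfan.inj (j + 1) hj q hqp.le
      (hα.eq_of_apply_eq (hfan.adj _ hj) (hfan.adj q hqp.le) hjc)
    omega
  have hleaf := fun v (hv : MissingAt G α (α s(u, x q)) v ∨ MissingAt G α μ v) =>
    bicolored_neighborSet_subsingleton hα hv
  by_cases h : (bicolored G α (α s(u, x q)) μ).connectedComponentMk (x (q - 1)) =
      (bicolored G α (α s(u, x q)) μ).connectedComponentMk u
  · have hup : (bicolored G α (α s(u, x q)) μ).connectedComponentMk u ≠
        (bicolored G α (α s(u, x q)) μ).connectedComponentMk (x p) := fun hp =>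
      not_reachable_of_three_leaves (fun _ _ _ _ => bicolored_adj_three hα) (hleaf u (.inr hμ))
        (hleaf _ (.inl (hsucc ▸ hfan.missing (q - 1) (by omega))))
        (hleaf _ (.inl (hcomet ▸ hfan.missing p le_rfl)))
        (hfan.adj _ (by omega)).ne (hfan.adj p le_rfl).ne
        (fun hx => absurd (hfan.inj _ (by omega) p le_rfl hx) (by omega))
        (ConnectedComponent.eq.mp h.symm) (ConnectedComponent.eq.mp hp)
    refine ⟨p, le_rfl, hcomet, hup, fun j hj hjc => ?_⟩
    rw [hqm j hj hjc, h]
    exact hup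
  · exact ⟨q - 1, by omega, hsucc.symm, Ne.symm h,
      fun j hj hjc => absurd (hqm j (by omega) hjc) (by omega)⟩

theorem IsFanRecolor.setOf_eq (hγ : IsFanRecolor β u k x m γ) (hm : ∀ j ≤ k, m j ≠ d)
    (hd : ∀ j, 1 ≤ j → j ≤ k → β s(u, x j) ≠ d) :
    {e | e ∈ G.edgeSet ∧ γ e = d} = {e | e ∈ G.edgeSet ∧ β e = d} \ {s(u, x 0)} := by
  ext e
  constructor
  · rintro ⟨he, hγe⟩
    by_cases hf : ∃ j ≤ k, e = s(u, x j)
    · obtain ⟨j, hj, rfl⟩ := hf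
      exact absurd (hγ.1 j hj ▸ hγe) (hm j hj)
    · push Not at hf
      exact ⟨⟨he, hγ.2 e hf ▸ hγe⟩, hf 0 k.zero_le⟩
  · rintro ⟨⟨he, hβe⟩, hne⟩
    have hf : ∀ j ≤ k, e ≠ s(u, x j) := by
      rintro (_ | j) hj rfl
      exacts [hne rfl, hd (j + 1) (by omega) hj hβe]
    exact ⟨he, (hγ.2 e hf).trans hβe⟩

end Fan

end

theorem stmt16_general {V : Type*} [Fintype V] (G : SimpleGraph V) [DecidableRel G.Adj]
    (α : Sym2 V → Fin (G.maxDegree + 1)) (hα : IsProperEdgeColoring G α)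
    (u : V) (p : ℕ) (x : ℕ → V) (m : ℕ → Fin (G.maxDegree + 1))
    (hfan : IsFan G α u p x m)
    (q : ℕ) (hq1 : 1 ≤ q) (hq2 : q ≤ p - 1) (hcomet : m p = α s(u, x q))
    (mu : Fin (G.maxDegree + 1)) (hmu : MissingAt G α mu u)
    (hdist : ∀ i, 1 ≤ i → i ≤ p → α s(u, x 0) ≠ α s(u, x i))
    (hdmu : α s(u, x 0) ≠ mu) :
    ∃ α' : Sym2 V → Fin (G.maxDegree + 1), IsProperEdgeColoring G α' ∧ KempeEquiv G α α' ∧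
      {e | e ∈ G.edgeSet ∧ α' e = α s(u, x 0)} =
        {e | e ∈ G.edgeSet ∧ α e = α s(u, x 0)} \ {s(u, x 0)} := by
  classical
  obtain ⟨k, hkp, hmk, huk, hprev⟩ :=
    hfan.exists_connectedComponentMk_ne_of_comet hα hq1 (by omega) hcomet hmu
  have hβfan := (hfan.of_le hkp).kempeSwap_update hmu hmk rfl huk hprev
  obtain ⟨γ, hγ, hβγ, hrec⟩ := hβfan.exists_kempeEquiv_isFanRecolor hα.kempeSwap
    (by rw [Function.update_self]; exact hmu.kempeSwap_of_connectedComponentMk_ne huk)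
  refine ⟨γ, hγ, .head isKempeSwap_kempeSwap hβγ, ?_⟩
  have hd : α s(u, x 0) ≠ α s(u, x q) := hdist q hq1 (by omega)
  rw [hrec.setOf_eq]
  · simp only [kempeSwap_apply_eq_iff hd hdmu]
  · intro j hj
    rcases Nat.lt_or_eq_of_le hj with hj | rfl
    · rw [Function.update_of_ne hj.ne, ← hfan.succ j (by omega)]
      exact (hdist (j + 1) (by omega) (by omega)).symm
    · rw [Function.update_self]
      exact hdmu.symm
  · intro j hj1 hjk
    rw [Ne, kempeSwap_apply_eq_iff hd hdmu]
    exact (hdist j hj1 (by omega)).symm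

/-- If the fan `X_u(α,v) = (ux₀,…,uxₚ)` is a comet (`m_α(xₚ) = α(ux_q)` for some
`1 ≤ q ≤ p-1`), and `α(ux₀)` differs from all the other fan-edge colors and from the color
missing at `u`, then there is a coloring `α'` Kempe-equivalent to `α` whose color class of
`α(ux₀)` is that of `α` with the edge `ux₀` removed. -/
theorem stmt16 {V : Type*} [Fintype V] (G : SimpleGraph V) [DecidableRel G.Adj]
    (α : Sym2 V → Fin (G.maxDegree + 1)) (hα : IsProperEdgeColoring G α)
    (u : V) (p : ℕ) (hp : 2 ≤ p) (x : ℕ → V) (m : ℕ → Fin (G.maxDegree + 1))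
    (hfan : IsFan G α u p x m)
    (q : ℕ) (hq1 : 1 ≤ q) (hq2 : q ≤ p - 1) (hcomet : m p = α s(u, x q))
    (mu : Fin (G.maxDegree + 1)) (hmu : MissingAt G α mu u)
    (hdist : ∀ i, 1 ≤ i → i ≤ p → α s(u, x 0) ≠ α s(u, x i))
    (hdmu : α s(u, x 0) ≠ mu) :
    ∃ α' : Sym2 V → Fin (G.maxDegree + 1), IsProperEdgeColoring G α' ∧ KempeEquiv G α α' ∧
      {e | e ∈ G.edgeSet ∧ α' e = α s(u, x 0)} =
        {e | e ∈ G.edgeSet ∧ α e = α s(u, x 0)} \ {s(u, x 0)} :=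
  stmt16_general G α hα u p x m hfan q hq1 hq2 hcomet mu hmu hdist hdmu
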